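/- Let X, Y be finitely valued random variables and K ≥ 1. For any finitely valued A with values in {1,...,K} such that A - X - Y is a Markov chain, defining Y_j = Y if A=j and Y_j = e otherwise, the quantity max over j in {1,...,K} of [H(X|Y_j, A) + I(X;A)] is at least H(X|Y) + ((K-1)/K) I(X;Y). -/

import Mathlib

open Finset

section Defs

/-- Probability of the event `X = x` under the mass function `μ`. -/
noncomputable def pr {Ω : Type*} [Fintype Ω] (μ : Ω → ℝ) {α : Type*} [Fintype α]
    [DecidableEq α] (X : Ω → α) (x : α) : ℝ :=
  ∑ ω, if X ω = x then μ ω else 0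

/-- Shannon entropy (base 2) of a finitely valued random variable. -/
noncomputable def ent {Ω : Type*} [Fintype Ω] (μ : Ω → ℝ) {α : Type*} [Fintype α]
    [DecidableEq α] (X : Ω → α) : ℝ :=
  - ∑ x, pr μ X x * Real.logb 2 (pr μ X x)

/-- Conditional entropy `H(X|Y) = H(X,Y) - H(Y)`. -/
noncomputable def condEnt {Ω : Type*} [Fintype Ω] (μ : Ω → ℝ) {α β : Type*}
    [Fintype α] [DecidableEq α] [Fintype β] [DecidableEq β]
    (X : Ω → α) (Y : Ω → β) : ℝ :=
  ent μ (fun ω => (X ω, Y ω)) - ent μ Y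

/-- Mutual information `I(X;Y) = H(X) - H(X|Y)`. -/
noncomputable def mi {Ω : Type*} [Fintype Ω] (μ : Ω → ℝ) {α β : Type*}
    [Fintype α] [DecidableEq α] [Fintype β] [DecidableEq β]
    (X : Ω → α) (Y : Ω → β) : ℝ :=
  ent μ X - condEnt μ X Y

/-- Conditional mutual information `I(X;Y|Z) = H(X|Z) - H(X|Y,Z)`. -/
noncomputable def cmi {Ω : Type*} [Fintype Ω] (μ : Ω → ℝ) {α β γ : Type*}
    [Fintype α] [DecidableEq α] [Fintype β] [DecidableEq β] [Fintype γ] [DecidableEq γ]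
    (X : Ω → α) (Y : Ω → β) (Z : Ω → γ) : ℝ :=
  condEnt μ X Z - condEnt μ X (fun ω => (Y ω, Z ω))

/-- `μ` is a probability mass function on the finite sample space `Ω`. -/
def IsProb {Ω : Type*} [Fintype Ω] (μ : Ω → ℝ) : Prop :=
  (∀ ω, 0 ≤ μ ω) ∧ ∑ ω, μ ω = 1

/-- `A` and `Y` are conditionally independent given `X` (Markov chain `A - X - Y`). -/
def CondIndep {Ω : Type*} [Fintype Ω] (μ : Ω → ℝ) {α β γ : Type*}
    [Fintype α] [DecidableEq α] [Fintype β] [DecidableEq β] [Fintype γ] [DecidableEq γ]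
    (A : Ω → α) (Y : Ω → β) (X : Ω → γ) : Prop :=
  ∀ a y x, pr μ (fun ω => (A ω, Y ω, X ω)) (a, y, x) * pr μ X x =
    pr μ (fun ω => (A ω, X ω)) (a, x) * pr μ (fun ω => (Y ω, X ω)) (y, x)

/-- Binary entropy function (base 2). -/
noncomputable def H2 (p : ℝ) : ℝ :=
  -(p * Real.logb 2 p) - (1 - p) * Real.logb 2 (1 - p)

end Defs

/-!
Averaging over `j`: on `{A = j}` the variable `Y_j` reveals `Y`, elsewhere nothing beyond `A`,
so `∑ⱼ H(X | Y_j, A) = H(X | Y, A) + (K - 1) H(X | A)` and the average of the objective is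
`H(X) - I(X;Y|A) / K`. The Markov chain gives `H(A | Y, X) = H(A | X)`, and together with
`H(Y, A) ≤ H(Y) + H(A)` this yields `I(X;Y|A) ≤ I(X;Y)`. So the average, hence some term,
is at least `H(X) - I(X;Y) / K = H(X|Y) + ((K-1)/K) I(X;Y)`.
Entropies are handled through `ent μ W = -∑ ω, μ ω * logb 2 (pr μ W (W ω))`, which turns
every identity into a pointwise one on the sample space.
-/

section Entropy

variable {Ω : Type*} [Fintype Ω] {μ : Ω → ℝ}
  {α β γ : Type*} [Fintype α] [DecidableEq α] [Fintype β] [DecidableEq β]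
  [Fintype γ] [DecidableEq γ]

lemma Fintype.sum_ite_eq_add_mul {ι : Type*} [Fintype ι] [DecidableEq ι] (i : ι) (a b : ℝ) :
    ∑ j, (if i = j then a else b) = a + (Fintype.card ι - 1) * b := by
  rw [← add_sum_erase univ _ (mem_univ i), if_pos rfl,
    Finset.sum_congr rfl fun j hj => if_neg (ne_of_mem_erase hj).symm, Finset.sum_const,
    card_erase_of_mem (mem_univ i), Finset.card_univ, nsmul_eq_mul,
    Nat.cast_sub (Fintype.card_pos_iff.2 ⟨i⟩), Nat.cast_one]

lemma pr_nonneg (hμ : ∀ ω, 0 ≤ μ ω) (W : Ω → α) (w : α) : 0 ≤ pr μ W w :=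
  sum_nonneg fun ω _ => by split_ifs <;> simp [hμ ω]

lemma pr_apply_self_pos (hμ : ∀ ω, 0 ≤ μ ω) (W : Ω → α) {ω : Ω} (hω : 0 < μ ω) :
    0 < pr μ W (W ω) :=
  hω.trans_le <| by
    simpa [pr] using single_le_sum (f := fun ω' => if W ω' = W ω then μ ω' else 0)
      (fun ω' _ => by split_ifs <;> simp [hμ ω']) (mem_univ ω)

lemma pr_congr {W : Ω → α} {V : Ω → β} {w : α} {v : β} (h : ∀ ω, W ω = w ↔ V ω = v) :
    pr μ W w = pr μ V v := by
  simp only [pr, h]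

variable (μ) in
lemma sum_pr_mul (W : Ω → α) (φ : α → ℝ) : ∑ w, pr μ W w * φ w = ∑ ω, μ ω * φ (W ω) := by
  simp only [pr, sum_mul, ite_mul, zero_mul]
  rw [sum_comm]
  simp

variable (μ) in
lemma ent_eq_neg_sum_mul_logb (W : Ω → α) :
    ent μ W = -∑ ω, μ ω * Real.logb 2 (pr μ W (W ω)) := by
  rw [ent, sum_pr_mul μ W fun w => Real.logb 2 (pr μ W w)]

lemma ent_congr {W : Ω → α} {V : Ω → β} (h : ∀ ω ω', W ω' = W ω ↔ V ω' = V ω) :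
    ent μ W = ent μ V := by
  simp only [ent_eq_neg_sum_mul_logb]
  congr 1
  exact sum_congr rfl fun ω _ => by rw [pr_congr (h ω)]

lemma ent_const_prod (c : α) (W : Ω → β) : ent μ (fun ω => (c, W ω)) = ent μ W :=
  ent_congr fun _ _ => by simp

lemma sum_pr_eq_one (hμ : IsProb μ) (W : Ω → α) : ∑ w, pr μ W w = 1 := by
  simpa [hμ.2] using sum_pr_mul μ W fun _ => 1

lemma ent_pair_le (hμ : IsProb μ) (U : Ω → α) (V : Ω → β) :
    ent μ (fun ω => (U ω, V ω)) ≤ ent μ U + ent μ V := by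
  set UV : Ω → α × β := fun ω => (U ω, V ω)
  set r : α × β → ℝ := fun p => pr μ U p.1 * pr μ V p.2 / pr μ UV p
  -- Gibbs' inequality, from `log r ≤ r - 1`
  have hlog : ∀ ω, μ ω * (Real.logb 2 (pr μ U (U ω)) + Real.logb 2 (pr μ V (V ω))
      - Real.logb 2 (pr μ UV (UV ω))) ≤ μ ω * (r (UV ω) - 1) / Real.log 2 := by
    intro ω
    rcases (hμ.1 ω).eq_or_lt with h0 | hpos
    · simp [← h0]
    have hU := pr_apply_self_pos hμ.1 U hpos
    have hV := pr_apply_self_pos hμ.1 V hpos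
    have hUV := pr_apply_self_pos hμ.1 UV hpos
    rw [← Real.logb_mul hU.ne' hV.ne', ← Real.logb_div (by positivity) hUV.ne',
      mul_div_assoc (μ ω)]
    refine mul_le_mul_of_nonneg_left ?_ hpos.le
    rw [Real.logb, div_le_div_iff_of_pos_right (Real.log_pos one_lt_two)]
    exact Real.log_le_sub_one_of_pos (by positivity)
  have hr : ∑ ω, μ ω * r (UV ω) ≤ ∑ ω, μ ω := by
    rw [← sum_pr_mul μ UV r, hμ.2]
    calc ∑ p, pr μ UV p * r p ≤ ∑ p : α × β, pr μ U p.1 * pr μ V p.2 :=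
          sum_le_sum fun p _ => ?_
      _ = 1 := by
        rw [Fintype.sum_prod_type, ← sum_mul_sum, sum_pr_eq_one hμ, sum_pr_eq_one hμ, one_mul]
    rcases eq_or_ne (pr μ UV p) 0 with h0 | hne
    · simp [h0, mul_nonneg (pr_nonneg hμ.1 U p.1) (pr_nonneg hμ.1 V p.2)]
    · rw [mul_div_cancel₀ _ hne]
  have hsum := sum_le_sum fun ω (_ : ω ∈ univ) => hlog ω
  rw [← sum_div] at hsum
  simp only [mul_sub, mul_add, mul_one, sum_sub_distrib, sum_add_distrib] at hsum
  simp only [ent_eq_neg_sum_mul_logb]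
  have : (∑ ω, μ ω * r (UV ω) - ∑ ω, μ ω) / Real.log 2 ≤ 0 :=
    div_nonpos_of_nonpos_of_nonneg (sub_nonpos.2 hr) (Real.log_pos one_lt_two).le
  linarith

lemma condEnt_pair_eq_of_condIndep (hμ : ∀ ω, 0 ≤ μ ω) {A : Ω → α} {Y : Ω → β} {X : Ω → γ}
    (h : CondIndep μ A Y X) : condEnt μ A (fun ω => (Y ω, X ω)) = condEnt μ A X := by
  have key : ∀ ω, μ ω * (Real.logb 2 (pr μ (fun ω => (A ω, Y ω, X ω)) (A ω, Y ω, X ω))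
      + Real.logb 2 (pr μ X (X ω))) = μ ω * (Real.logb 2 (pr μ (fun ω => (A ω, X ω)) (A ω, X ω))
      + Real.logb 2 (pr μ (fun ω => (Y ω, X ω)) (Y ω, X ω))) := by
    intro ω
    rcases (hμ ω).eq_or_lt with h0 | hpos
    · simp [← h0]
    rw [← Real.logb_mul (pr_apply_self_pos hμ (fun ω => (A ω, Y ω, X ω)) hpos).ne'
      (pr_apply_self_pos hμ X hpos).ne', ← Real.logb_mul
      (pr_apply_self_pos hμ (fun ω => (A ω, X ω)) hpos).ne'
      (pr_apply_self_pos hμ (fun ω => (Y ω, X ω)) hpos).ne', h]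
  simp only [condEnt, ent_eq_neg_sum_mul_logb]
  have := sum_congr rfl fun ω (_ : ω ∈ univ) => key ω
  simp only [mul_add, sum_add_distrib] at this
  linarith

lemma cmi_le_mi_of_condIndep (hμ : IsProb μ) {X : Ω → α} {Y : Ω → β} {A : Ω → γ}
    (h : CondIndep μ A Y X) : cmi μ X Y A ≤ mi μ X Y := by
  have hMarkov := condEnt_pair_eq_of_condIndep hμ.1 h
  have hXYA : ent μ (fun ω => (X ω, Y ω, A ω)) = ent μ (fun ω => (A ω, Y ω, X ω)) :=
    ent_congr fun _ _ => by simp only [Prod.mk.injEq]; tauto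
  have hXA : ent μ (fun ω => (X ω, A ω)) = ent μ (fun ω => (A ω, X ω)) :=
    ent_congr fun _ _ => by simp only [Prod.mk.injEq]; tauto
  have hXY : ent μ (fun ω => (X ω, Y ω)) = ent μ (fun ω => (Y ω, X ω)) :=
    ent_congr fun _ _ => by simp only [Prod.mk.injEq]; tauto
  have hsub := ent_pair_le hμ Y A
  simp only [cmi, mi, condEnt] at hMarkov ⊢
  linarith

lemma pr_erase_apply (S : Ω → α) (T : Ω → β) (A : Ω → γ) (j : γ) (ω : Ω) :
    pr μ (fun ω => (S ω, (if A ω = j then some (T ω) else none), A ω))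
        (S ω, (if A ω = j then some (T ω) else none), A ω) =
      if A ω = j then pr μ (fun ω => (S ω, T ω, A ω)) (S ω, T ω, A ω)
      else pr μ (fun ω => (S ω, A ω)) (S ω, A ω) := by
  split_ifs with hj <;> refine pr_congr fun ω' => ?_ <;> by_cases hj' : A ω' = j <;>
    simp [hj, hj', eq_comm (a := j)]

lemma sum_ent_erase (S : Ω → α) (T : Ω → β) (A : Ω → γ) :
    ∑ j, ent μ (fun ω => (S ω, (if A ω = j then some (T ω) else none), A ω)) =
      ent μ (fun ω => (S ω, T ω, A ω)) + (Fintype.card γ - 1) * ent μ (fun ω => (S ω, A ω)) := by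
  simp only [ent_eq_neg_sum_mul_logb, pr_erase_apply, sum_neg_distrib]
  rw [sum_comm]
  simp only [← mul_sum, apply_ite (Real.logb 2), Fintype.sum_ite_eq_add_mul, mul_add,
    sum_add_distrib]
  rw [mul_neg, mul_sum]
  simp only [mul_left_comm (Fintype.card γ - 1 : ℝ)]
  ring

lemma sum_condEnt_erase (X : Ω → α) (Y : Ω → β) (A : Ω → γ) :
    ∑ j, condEnt μ X (fun ω => ((if A ω = j then some (Y ω) else none), A ω)) =
      condEnt μ X (fun ω => (Y ω, A ω)) + (Fintype.card γ - 1) * condEnt μ X A := by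
  have hY := sum_ent_erase (μ := μ) (fun _ => ()) Y A
  beta_reduce at hY
  simp only [ent_const_prod] at hY
  simp only [condEnt, sum_sub_distrib, sum_ent_erase, hY]
  ring

end Entropy

/-- Converse bound of Corollary 1: for any action `A` with
`A - X - Y` Markov, the maximum over `j` of `H(X|Y_j,A) + I(X;A)` is at least
`H(X|Y) + ((K-1)/K) I(X;Y)` (i.e. some `j` attains at least this value). -/
theorem stmt2 {Ω α β : Type*} [Fintype Ω] [Fintype α] [DecidableEq α]
    [Fintype β] [DecidableEq β] {K : ℕ} (hK : 1 ≤ K)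
    (μ : Ω → ℝ) (hμ : IsProb μ) (X : Ω → α) (Y : Ω → β) (A : Ω → Fin K)
    (hMarkov : CondIndep μ A Y X) :
    ∃ j : Fin K,
      condEnt μ X Y + ((K - 1 : ℝ) / K) * mi μ X Y ≤
        condEnt μ X
            (fun ω => ((if A ω = j then some (Y ω) else (none : Option β)), A ω))
          + mi μ X A := by
  have hcmi := cmi_le_mi_of_condIndep hμ hMarkov
  refine (exists_le_of_sum_le (univ_nonempty_iff.2 ⟨⟨0, hK⟩⟩) ?_).imp fun j hj => hj.2
  simp only [sum_add_distrib, sum_const, card_univ, Fintype.card_fin, nsmul_eq_mul]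
  rw [sum_condEnt_erase, Fintype.card_fin]
  simp only [cmi, mi] at hcmi ⊢
  field_simp
  linarith
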